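/- For every nonnegative integer n, the n-th derivative of the cotangent function at x equals (-1)^n P_n(cot x). -/
import Mathlib


noncomputable def P : ℕ → Polynomial ℝ
  | 0 => Polynomial.X
  | n + 1 => (1 + Polynomial.X ^ 2) * Polynomial.derivative (P n)

theorem deriv_cot (n : ℕ) (x : ℝ) (hx : Real.sin x ≠ 0) :
    iteratedDeriv n (fun y : ℝ => Real.cos y / Real.sin y) x
      = (-1 : ℝ) ^ n * (P n).eval (Real.cos x / Real.sin x) := by
  induction n generalizing x with
  | zero => simp [P]
  | succ n ih =>
    rw [iteratedDeriv_succ]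
    have hs : IsOpen {y : ℝ | Real.sin y ≠ 0} :=
      isOpen_ne.preimage Real.continuous_sin
    have hev : iteratedDeriv n (fun y : ℝ => Real.cos y / Real.sin y)
        =ᶠ[nhds x] fun y => (-1 : ℝ) ^ n * (P n).eval (Real.cos y / Real.sin y) :=
      Filter.eventuallyEq_of_mem (hs.mem_nhds hx) fun y hy => ih y hy
    rw [hev.deriv_eq]
    have h1 : HasDerivAt (fun y : ℝ => Real.cos y / Real.sin y)
        (((-Real.sin x) * Real.sin x - Real.cos x * Real.cos x) / (Real.sin x) ^ 2) x :=
      (Real.hasDerivAt_cos x).div (Real.hasDerivAt_sin x) hx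
    have h2 : HasDerivAt (fun y : ℝ => (P n).eval (Real.cos y / Real.sin y))
        ((P n).derivative.eval (Real.cos x / Real.sin x) *
          (((-Real.sin x) * Real.sin x - Real.cos x * Real.cos x) / (Real.sin x) ^ 2)) x :=
      (Polynomial.hasDerivAt (P n) _).comp x h1
    have h3 := h2.const_mul ((-1 : ℝ) ^ n)
    rw [h3.deriv]
    have hsc : Real.sin x ^ 2 + Real.cos x ^ 2 = 1 := Real.sin_sq_add_cos_sq x
    simp only [P, Polynomial.eval_mul, Polynomial.eval_add, Polynomial.eval_one,
      Polynomial.eval_pow, Polynomial.eval_X, pow_succ]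
    field_simp
    nlinarith [sq_nonneg (Real.sin x), sq_nonneg (Real.cos x),
      sq_nonneg ((P n).derivative.eval (Real.cos x / Real.sin x))]
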